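/- Let W, V_1, ..., V_n be a Nica-covariant isometric representation of the odometer semigroup O_n. Then for every 1 ≤ i ≤ n and j ≥ 0, there exist j' ≥ 0 and 1 ≤ i' ≤ n such that V_i* W^j = W^{j'} V_{i'}*; consequently ker(V_i* W^j) = ker V_{i'}*, and ⋂_{i=1}^n ⋂_{j≥0} ker(V_i* W^j) = ⋂_{i=1}^n ker V_i*. -/

import Mathlib

open ContinuousLinearMap

/-!
Taking adjoints in `W V_i = V_{i+1}` and using `W* W = 1` gives `V_{i+1}* W = V_i*`, while
the adjoint of the Nica-covariance relation gives `V_1* W = W V_n*`. So each `V_i*` can be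
pushed past one factor `W` at the cost of changing `i` and emitting at most one `W` on the
left; iterating, `V_i* W^j = W^{j'} V_{i'}*`. As `W^{j'}` is an isometry, it is injective,
so `ker (V_i* W^j) = ker V_{i'}*`; the intersection identity follows, with `j = 0` giving the
other inclusion.
-/

theorem exists_mul_pow_eq_pow_mul {M ι : Type*} [Monoid M] {a : ι → M} {w : M}
    (h : ∀ i, ∃ k i', a i * w = w ^ k * a i') (j : ℕ) (i : ι) :
    ∃ k i', a i * w ^ j = w ^ k * a i' := by
  induction j generalizing i with
  | zero => exact ⟨0, i, by simp⟩
  | succ j ih =>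
    obtain ⟨k, i', hi⟩ := h i
    obtain ⟨k', i'', hi'⟩ := ih i'
    exact ⟨k + k', i'', by rw [pow_succ', ← mul_assoc, hi, mul_assoc, hi', ← mul_assoc, pow_add]⟩

theorem ContinuousLinearMap.ker_pow_comp_of_comp_eq_one {R M N : Type*} [Semiring R]
    [TopologicalSpace M] [AddCommMonoid M] [Module R M] [TopologicalSpace N] [AddCommMonoid N]
    [Module R N] {S W : M →L[R] M} (hSW : S ∘L W = 1) (j : ℕ) (A : N →L[R] M) :
    LinearMap.ker ((W ^ j) ∘L A : N →ₗ[R] M) = LinearMap.ker (A : N →ₗ[R] M) := by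
  have hW : Function.Injective W :=
    Function.LeftInverse.injective (g := S) fun x => by simpa using congr($hSW x)
  refine LinearMap.ker_comp_of_ker_eq_bot _ (LinearMap.ker_eq_bot_of_injective ?_)
  exact (FunLike.coe_pow_eq_iterate W j).symm ▸ hW.iterate j

theorem exists_adjoint_mul_eq_pow_mul_adjoint {H : Type*} [NormedAddCommGroup H]
    [InnerProductSpace ℂ H] [CompleteSpace H] {n : ℕ} (hn : 0 < n) {W : H →L[ℂ] H}
    {V : Fin n → H →L[ℂ] H} (hWiso : adjoint W ∘L W = 1)
    (hWV : ∀ i : Fin n, ∀ h : (i : ℕ) + 1 < n, W ∘L V i = V ⟨(i : ℕ) + 1, h⟩)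
    (hNC : adjoint W ∘L V ⟨0, hn⟩ = V ⟨n - 1, Nat.sub_one_lt_of_lt hn⟩ ∘L adjoint W) (i : Fin n) :
    ∃ k i', adjoint (V i) * W = W ^ k * adjoint (V i') := by
  obtain ⟨i, hi⟩ := i
  rcases i with _ | i
  · refine ⟨1, ⟨n - 1, Nat.sub_one_lt_of_lt hn⟩, ?_⟩
    simpa [adjoint_comp, mul_def] using congr(adjoint $hNC)
  · refine ⟨0, ⟨i, by omega⟩, ?_⟩
    rw [← hWV ⟨i, by omega⟩ hi, adjoint_comp, mul_def, comp_assoc, hWiso, pow_zero, one_mul]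
    rfl

/-- For a Nica-covariant isometric representation `{W, V_1, …, V_n}` of `O_n`:
for every `i` and `j ≥ 0` there are `j' ≥ 0` and `i'` with `V_i* W^j = W^{j'} V_{i'}*`,
hence `ker (V_i* W^j) = ker V_{i'}*`, and consequently
`⋂_i ⋂_j ker (V_i* W^j) = ⋂_i ker V_i*`. -/
theorem stmt_12 {H : Type*} [NormedAddCommGroup H] [InnerProductSpace ℂ H] [CompleteSpace H]
    (n : ℕ) (hn : 0 < n) (W : H →L[ℂ] H) (V : Fin n → H →L[ℂ] H)
    (hWiso : adjoint W ∘L W = 1)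
    (hWV : ∀ i : Fin n, ∀ h : (i : ℕ) + 1 < n, W ∘L V i = V ⟨(i : ℕ) + 1, h⟩)
    (hNC : adjoint W ∘L V ⟨0, hn⟩ = V ⟨n - 1, by omega⟩ ∘L adjoint W) :
    (∀ i : Fin n, ∀ j : ℕ, ∃ j' : ℕ, ∃ i' : Fin n,
      adjoint (V i) ∘L W ^ j = (W ^ j' : H →L[ℂ] H) ∘L adjoint (V i') ∧
      LinearMap.ker (adjoint (V i) ∘L W ^ j : H →ₗ[ℂ] H) = LinearMap.ker (adjoint (V i') : H →ₗ[ℂ] H)) ∧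
    (⨅ i : Fin n, ⨅ j : ℕ, LinearMap.ker (adjoint (V i) ∘L W ^ j : H →ₗ[ℂ] H)) =
      ⨅ i : Fin n, LinearMap.ker (adjoint (V i) : H →ₗ[ℂ] H) := by
  have commute : ∀ i : Fin n, ∀ j : ℕ, ∃ j' : ℕ, ∃ i' : Fin n,
      adjoint (V i) ∘L W ^ j = (W ^ j' : H →L[ℂ] H) ∘L adjoint (V i') ∧
      LinearMap.ker (adjoint (V i) ∘L W ^ j : H →ₗ[ℂ] H) =
        LinearMap.ker (adjoint (V i') : H →ₗ[ℂ] H) := by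
    intro i j
    obtain ⟨j', i', h⟩ := exists_mul_pow_eq_pow_mul
      (exists_adjoint_mul_eq_pow_mul_adjoint hn hWiso hWV hNC) j i
    exact ⟨j', i', h, by rw [← mul_def, h, mul_def, ker_pow_comp_of_comp_eq_one hWiso]⟩
  refine ⟨commute, le_antisymm ?_ ?_⟩
  · exact le_iInf fun i => (iInf_le _ i).trans <| (iInf_le _ 0).trans (by simp [one_def])
  · refine le_iInf fun i => le_iInf fun j => ?_
    obtain ⟨j', i', -, hker⟩ := commute i j
    exact hker ▸ iInf_le _ i'
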